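/- arXiv:1712.10067 — 6 statements merged into one kernel-verified Lean document; each statement's English description precedes it below -/
import Mathlib

section
/- Let A ∈ ℂ^{n×n}, B ∈ ℂ^{n×m}, C ∈ ℂ^{p×n}, D ∈ ℂ^{p×m}, E ∈ ℂ^{n×n} with E invertible, and let ε > 0 with ε‖D‖₂ < 1. For λ ∈ ℂ not an eigenvalue of the pencil (A,E) (i.e., λE - A invertible), define the transfer function G(λ) = C(λE - A)⁻¹B + D. Then ‖G(λ)‖₂ ≥ ε⁻¹ if and only if there exists Δ ∈ ℂ^{m×p} with ‖Δ‖₂ ≤ ε such that λ is an eigenvalue of the pencil (M(Δ), E), where M(Δ) = A + BΔ(I - DΔ)⁻¹C. -/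
/-!
Writing `S = zE - A` and `G = G(z)`, we have `zE - M(Δ) = S (I - S⁻¹BΔ(I - DΔ)⁻¹C)`, and
Sylvester's determinant identity turns this into
`det (zE - M(Δ)) · det (I - DΔ) = det S · det (I - GΔ)`. As `‖DΔ‖ < 1`, `z` is an eigenvalue of
`(M(Δ), E)` iff `I - GΔ` is singular. If `‖G‖ < ε⁻¹` then `‖GΔ‖ < 1` and `I - GΔ` is invertible by
the Neumann series. If `‖G‖ ≥ ε⁻¹`, a vector `x` at which `G` attains its norm gives the rank-one
`Δ = ‖G‖⁻² x (Gx)ᴴ`, of norm at most `‖G‖⁻¹ ≤ ε`, with `GΔ (Gx) = Gx`.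
-/

open Matrix Filter Set

noncomputable def specNorm {p m : ℕ} (A : Matrix (Fin p) (Fin m) ℂ) : ℝ :=
  ‖(Matrix.toEuclideanLin A).toContinuousLinearMap‖

noncomputable def pertSys {n m p : ℕ} (A : Matrix (Fin n) (Fin n) ℂ) (B : Matrix (Fin n) (Fin m) ℂ)
    (C : Matrix (Fin p) (Fin n) ℂ) (D : Matrix (Fin p) (Fin m) ℂ)
    (Δ : Matrix (Fin m) (Fin p) ℂ) : Matrix (Fin n) (Fin n) ℂ :=
  A + B * Δ * (1 - D * Δ)⁻¹ * C

noncomputable def svSet {n m p : ℕ} (ε : ℝ) (A : Matrix (Fin n) (Fin n) ℂ)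
    (B : Matrix (Fin n) (Fin m) ℂ) (C : Matrix (Fin p) (Fin n) ℂ)
    (D : Matrix (Fin p) (Fin m) ℂ) (E : Matrix (Fin n) (Fin n) ℂ) : Set ℂ :=
  {z | ∃ Δ : Matrix (Fin m) (Fin p) ℂ, specNorm Δ ≤ ε ∧ (z • E - pertSys A B C D Δ).det = 0}

noncomputable def transferFn {n m p : ℕ} (A : Matrix (Fin n) (Fin n) ℂ)
    (B : Matrix (Fin n) (Fin m) ℂ) (C : Matrix (Fin p) (Fin n) ℂ)
    (D : Matrix (Fin p) (Fin m) ℂ) (E : Matrix (Fin n) (Fin n) ℂ) (z : ℂ) :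
    Matrix (Fin p) (Fin m) ℂ :=
  C * (z • E - A)⁻¹ * B + D

open scoped Matrix.Norms.L2Operator

theorem specNorm_eq_l2_opNorm {p m : ℕ} (A : Matrix (Fin p) (Fin m) ℂ) : specNorm A = ‖A‖ := rfl

theorem ContinuousLinearMap.exists_norm_le_one_and_norm_apply_eq_opNorm
    {𝕜 E F : Type*} [DenselyNormedField 𝕜] [NormedAddCommGroup E] [NormedSpace 𝕜 E]
    [ProperSpace E] [SeminormedAddCommGroup F] [NormedSpace 𝕜 F] (f : E →L[𝕜] F) :
    ∃ x, ‖x‖ ≤ 1 ∧ ‖f x‖ = ‖f‖ := by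
  obtain ⟨x, hx, hfx⟩ := ((isCompact_closedBall (0 : E) 1).image
    (continuous_norm.comp f.continuous)).sSup_mem
    ((Metric.nonempty_closedBall.2 zero_le_one).image fun x => ‖f x‖)
  exact ⟨x, mem_closedBall_zero_iff.1 hx, hfx.trans f.sSup_unitClosedBall_eq_norm⟩

namespace Matrix

section Determinant

variable {R n m p : Type*} [CommRing R] [Fintype n] [Fintype m] [Fintype p]
  [DecidableEq n] [DecidableEq p]

theorem det_one_sub_vecMulVec (u v : n → R) : (1 - vecMulVec u v).det = 1 - v ⬝ᵥ u := by
  rw [sub_eq_add_neg, ← neg_vecMulVec, vecMulVec_eq Unit,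
    det_one_add_replicateCol_mul_replicateRow, dotProduct_neg, ← sub_eq_add_neg]

theorem det_sub_mul_mul_inv_mul_mul_det (S : Matrix n n R) (B : Matrix n m R)
    (C : Matrix p n R) (D : Matrix p m R) (Δ : Matrix m p R) (hS : IsUnit S.det)
    (hD : IsUnit (1 - D * Δ).det) :
    (S - B * Δ * (1 - D * Δ)⁻¹ * C).det * (1 - D * Δ).det
      = S.det * (1 - (C * S⁻¹ * B + D) * Δ).det := by
  set K := B * Δ * (1 - D * Δ)⁻¹
  have hfactor : S - K * C = S * (1 - S⁻¹ * K * C) := by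
    rw [Matrix.mul_sub, Matrix.mul_one, ← Matrix.mul_assoc, ← Matrix.mul_assoc,
      mul_nonsing_inv S hS, Matrix.one_mul]
  have hcancel : (1 - C * (S⁻¹ * K)) * (1 - D * Δ) = 1 - (C * S⁻¹ * B + D) * Δ := by
    simp only [K, Matrix.sub_mul, Matrix.one_mul, Matrix.mul_assoc, nonsing_inv_mul _ hD,
      Matrix.mul_one, Matrix.add_mul]
    abel
  rw [hfactor, det_mul, det_one_sub_mul_comm (S⁻¹ * K) C, mul_assoc, ← det_mul, hcancel]

theorem det_sub_mul_mul_inv_mul_eq_zero_iff {S : Matrix n n R} {B : Matrix n m R}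
    {C : Matrix p n R} {D : Matrix p m R} {Δ : Matrix m p R} (hS : IsUnit S.det)
    (hD : IsUnit (1 - D * Δ).det) :
    (S - B * Δ * (1 - D * Δ)⁻¹ * C).det = 0 ↔ (1 - (C * S⁻¹ * B + D) * Δ).det = 0 := by
  rw [← hD.mul_left_eq_zero, det_sub_mul_mul_inv_mul_mul_det S B C D Δ hS hD,
    hS.mul_right_eq_zero]

end Determinant

variable {𝕜 m n p : Type*} [RCLike 𝕜] [Fintype m] [Fintype n] [Fintype p]

theorem l2_opNorm_vecMulVec_star [DecidableEq n] (x : EuclideanSpace 𝕜 m)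
    (y : EuclideanSpace 𝕜 n) : ‖vecMulVec x (star y)‖ = ‖x‖ * ‖y‖ := by
  rw [← InnerProductSpace.symm_toEuclideanLin_rankOne, l2_opNorm_def, LinearEquiv.trans_apply,
    LinearEquiv.apply_symm_apply]
  exact InnerProductSpace.norm_rankOne x y

theorem det_one_sub_mul_ne_zero [DecidableEq m] [DecidableEq n] {X : Matrix m n 𝕜}
    {Y : Matrix n m 𝕜} (h : ‖X‖ * ‖Y‖ < 1) : (1 - X * Y).det ≠ 0 :=
  ((isUnit_iff_isUnit_det _).1 <|
    isUnit_one_sub_of_norm_lt_one ((l2_opNorm_mul X Y).trans_lt h)).ne_zero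

theorem exists_l2_opNorm_le_inv_and_det_one_sub_mul_eq_zero [DecidableEq m] [DecidableEq p]
    {G : Matrix p m 𝕜} (hG : 0 < ‖G‖) :
    ∃ Δ : Matrix m p 𝕜, ‖Δ‖ ≤ ‖G‖⁻¹ ∧ (1 - G * Δ).det = 0 := by
  obtain ⟨x, hx, hGx⟩ :=
    (toEuclideanLin G).toContinuousLinearMap.exists_norm_le_one_and_norm_apply_eq_opNorm
  set y : EuclideanSpace 𝕜 p := toEuclideanLin G x
  have hy : ‖y‖ = ‖G‖ := hGx
  refine ⟨vecMulVec (((‖G‖ ^ 2)⁻¹ : 𝕜) • x) (star y), ?_, ?_⟩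
  · rw [← WithLp.ofLp_smul, l2_opNorm_vecMulVec_star, norm_smul, hy]
    have hc : ‖((‖G‖ ^ 2)⁻¹ : 𝕜)‖ = (‖G‖ ^ 2)⁻¹ := by simp
    calc ‖((‖G‖ ^ 2)⁻¹ : 𝕜)‖ * ‖x‖ * ‖G‖ ≤ (‖G‖ ^ 2)⁻¹ * 1 * ‖G‖ := by rw [hc]; gcongr
      _ = ‖G‖⁻¹ := by field_simp
  · have hyy : star (WithLp.ofLp y) ⬝ᵥ WithLp.ofLp y = (‖G‖ : 𝕜) ^ 2 := by
      rw [dotProduct_comm, ← EuclideanSpace.inner_eq_star_dotProduct,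
        inner_self_eq_norm_sq_to_K, hy]
    rw [mul_vecMulVec, det_one_sub_vecMulVec, mulVec_smul, dotProduct_smul]
    change 1 - _ • (star (WithLp.ofLp y) ⬝ᵥ WithLp.ofLp y) = 0
    rw [hyy, smul_eq_mul, inv_mul_cancel₀ (by exact_mod_cast (pow_pos hG 2).ne'), sub_self]

end Matrix

theorem det_sub_pertSys_eq_zero_iff {n m p : ℕ} {A : Matrix (Fin n) (Fin n) ℂ}
    {B : Matrix (Fin n) (Fin m) ℂ} {C : Matrix (Fin p) (Fin n) ℂ} {D : Matrix (Fin p) (Fin m) ℂ}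
    {E : Matrix (Fin n) (Fin n) ℂ} {z : ℂ} {Δ : Matrix (Fin m) (Fin p) ℂ}
    (hz : (z • E - A).det ≠ 0) (hD : ‖D‖ * ‖Δ‖ < 1) :
    (z • E - pertSys A B C D Δ).det = 0 ↔ (1 - transferFn A B C D E z * Δ).det = 0 := by
  rw [pertSys, ← sub_sub]
  exact det_sub_mul_mul_inv_mul_eq_zero_iff hz.isUnit (det_one_sub_mul_ne_zero hD).isUnit

theorem eig_ntf_equivalence_general {n m p : ℕ} (A : Matrix (Fin n) (Fin n) ℂ)
    (B : Matrix (Fin n) (Fin m) ℂ) (C : Matrix (Fin p) (Fin n) ℂ)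
    (D : Matrix (Fin p) (Fin m) ℂ) (E : Matrix (Fin n) (Fin n) ℂ)
    (ε : ℝ) (hε : 0 < ε) (hεD : ε * specNorm D < 1)
    (z : ℂ) (hz : (z • E - A).det ≠ 0) :
    ε⁻¹ ≤ specNorm (transferFn A B C D E z) ↔
      ∃ Δ : Matrix (Fin m) (Fin p) ℂ, specNorm Δ ≤ ε ∧
        (z • E - pertSys A B C D Δ).det = 0 := by
  simp only [specNorm_eq_l2_opNorm] at hεD ⊢
  set G := transferFn A B C D E z
  have hDΔ (Δ : Matrix (Fin m) (Fin p) ℂ) (hΔ : ‖Δ‖ ≤ ε) : ‖D‖ * ‖Δ‖ < 1 :=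
    calc ‖D‖ * ‖Δ‖ ≤ ‖D‖ * ε := by gcongr
      _ < 1 := by rwa [mul_comm]
  constructor
  · intro hG
    obtain ⟨Δ, hΔ, hdet⟩ :=
      exists_l2_opNorm_le_inv_and_det_one_sub_mul_eq_zero ((inv_pos.2 hε).trans_le hG)
    have hΔε : ‖Δ‖ ≤ ε := hΔ.trans (inv_le_of_inv_le₀ hε hG)
    exact ⟨Δ, hΔε, (det_sub_pertSys_eq_zero_iff hz (hDΔ Δ hΔε)).2 hdet⟩
  · rintro ⟨Δ, hΔ, hdet⟩
    by_contra! hG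
    have hGΔ : ‖G‖ * ‖Δ‖ < 1 :=
      calc ‖G‖ * ‖Δ‖ ≤ ‖G‖ * ε := by gcongr
        _ < ε⁻¹ * ε := by gcongr
        _ = 1 := inv_mul_cancel₀ hε.ne'
    exact det_one_sub_mul_ne_zero hGΔ ((det_sub_pertSys_eq_zero_iff hz (hDΔ Δ hΔ)).1 hdet)

theorem eig_ntf_equivalence {n m p : ℕ} (A : Matrix (Fin n) (Fin n) ℂ)
    (B : Matrix (Fin n) (Fin m) ℂ) (C : Matrix (Fin p) (Fin n) ℂ)
    (D : Matrix (Fin p) (Fin m) ℂ) (E : Matrix (Fin n) (Fin n) ℂ)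
    (hE : IsUnit E) (ε : ℝ) (hε : 0 < ε) (hεD : ε * specNorm D < 1)
    (z : ℂ) (hz : (z • E - A).det ≠ 0) :
    ε⁻¹ ≤ specNorm (transferFn A B C D E z) ↔
      ∃ Δ : Matrix (Fin m) (Fin p) ℂ, specNorm Δ ≤ ε ∧
        (z • E - pertSys A B C D Δ).det = 0 :=
  eig_ntf_equivalence_general A B C D E ε hε hεD z hz
end

section
/- The matrix pencil (𝓜, 𝓝) of Theorem on vertical searches cannot be singular: that is, with γ > 0 not a singular value of D and (A,E) regular with E invertible, det(λ𝓝 - 𝓜) is not identically zero as a function of λ, where 𝓜 and 𝓝 are defined as in the vertical-search pencil with horizontal offset x ∈ ℝ. -/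
open Matrix Filter Set

private lemma eval_charpoly_det {k : Type*} [Fintype k] [DecidableEq k]
    (M : Matrix k k ℂ) (μ : ℂ) :
    M.charpoly.eval μ = (μ • (1 : Matrix k k ℂ) - M).det := by
  rw [Matrix.charpoly, ← Polynomial.coe_evalRingHom, RingHom.map_det]
  congr 1
  ext i j
  by_cases h : i = j <;>
    simp [Matrix.charmatrix_apply, Matrix.one_apply, Matrix.smul_apply, h]

private lemma pencil_reg {k : Type*} [Fintype k] [DecidableEq k] (N M : Matrix k k ℂ) (hN : N.det ≠ 0) :
    ∃ lam : ℂ, (lam • N - M).det ≠ 0 := by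
  have hNu : IsUnit N := (Matrix.isUnit_iff_isUnit_det N).2 (Ne.isUnit hN)
  set P := (M * N⁻¹).charpoly with hP
  have hPne : P ≠ 0 := (Matrix.charpoly_monic _).ne_zero
  obtain ⟨lam, _, hlam⟩ := (Set.infinite_univ (α := ℂ)).exists_notMem_finset P.roots.toFinset
  refine ⟨lam, ?_⟩
  have heval : P.eval lam ≠ 0 := by
    intro h
    exact hlam (Multiset.mem_toFinset.2 ((Polynomial.mem_roots hPne).2 h))
  have key : lam • N - M = (lam • (1 : Matrix k k ℂ) - M * N⁻¹) * N := by
    rw [Matrix.sub_mul, Matrix.smul_mul, Matrix.one_mul,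
      Matrix.nonsing_inv_mul_cancel_right _ _ (isUnit_iff_ne_zero.2 hN)]
  rw [key, Matrix.det_mul]
  exact mul_ne_zero (by rwa [← eval_charpoly_det]) hN

theorem vertical_pencil_regular {n m p : ℕ} (A E : Matrix (Fin n) (Fin n) ℂ)
    (B : Matrix (Fin n) (Fin m) ℂ) (C : Matrix (Fin p) (Fin n) ℂ)
    (D : Matrix (Fin p) (Fin m) ℂ) (x γ : ℝ) (hγ : 0 < γ)
    (hsv : ((γ ^ 2 : ℂ) • (1 : Matrix (Fin m) (Fin m) ℂ) - Dᴴ * D).det ≠ 0)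
    (hE : IsUnit E) (hreg : ∃ z : ℂ, (z • E - A).det ≠ 0) :
    ∃ lam : ℂ,
      (lam • (Matrix.fromBlocks E 0 0 Eᴴ : Matrix (Fin n ⊕ Fin n) (Fin n ⊕ Fin n) ℂ) -
        Matrix.fromBlocks
          (A - (x : ℂ) • E - B * (Dᴴ * D - (γ ^ 2 : ℂ) • 1)⁻¹ * Dᴴ * C)
          (-((γ : ℂ) • (B * (Dᴴ * D - (γ ^ 2 : ℂ) • 1)⁻¹ * Bᴴ)))
          ((γ : ℂ) • (Cᴴ * (D * Dᴴ - (γ ^ 2 : ℂ) • 1)⁻¹ * C))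
          (-(A - (x : ℂ) • E - B * (Dᴴ * D - (γ ^ 2 : ℂ) • 1)⁻¹ * Dᴴ * C)ᴴ)).det ≠ 0 := by
  apply pencil_reg
  rw [Matrix.det_fromBlocks_zero₁₂]
  have hdE : E.det ≠ 0 := ((Matrix.isUnit_iff_isUnit_det E).1 hE).ne_zero
  refine mul_ne_zero hdE ?_
  rw [Matrix.det_conjTranspose]
  exact star_ne_zero.2 hdE
end

section
/- Let λ: ℝ → ℂ be twice differentiable at 0, Z(t) = λ(t)E - A with Z(0) invertible, and G(λ(t)) = C Z(t)⁻¹ B + D. Then t ↦ G(λ(t)) is twice differentiable at 0 with second derivative 2λ'(0)² C Z(0)⁻¹ E Z(0)⁻¹ E Z(0)⁻¹ B - λ''(0) C Z(0)⁻¹ E Z(0)⁻¹ B. -/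
open Matrix Filter Set

/-!
Write `Z(t) = λ(t)E - A`. Inversion in a complete normed algebra has derivative
`h ↦ -Z⁻¹ h Z⁻¹`, so `d/dt G(λ(t)) = -λ'(t) C Z⁻¹ E Z⁻¹ B` wherever `Z(t)` is invertible, which
holds near `0` because the units form an open set. Differentiating once more, `λ''` hits the scalar
factor, and each of the two `Z⁻¹` factors contributes `λ'(0)² C Z⁻¹ E Z⁻¹ E Z⁻¹ B`.
-/

-- This norm only serves to make square matrices a complete normed algebra: `HasDerivAt` on
-- matrices refers to the product topology, which the norm induces.
attribute [local instance] Matrix.linftyOpNormedAddCommGroup Matrix.linftyOpNormedSpace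
  Matrix.linftyOpNormedRing Matrix.linftyOpNormedAlgebra

theorem HasDerivAt.ringInverse {𝕜 R : Type*} [NontriviallyNormedField 𝕜] [NormedRing R]
    [HasSummableGeomSeries R] [NormedAlgebra 𝕜 R] {f : 𝕜 → R} {f' : R} {x : 𝕜}
    (hf : HasDerivAt f f' x) (hx : IsUnit (f x)) :
    HasDerivAt (fun y => Ring.inverse (f y))
      (-(Ring.inverse (f x) * f' * Ring.inverse (f x))) x := by
  obtain ⟨u, hu⟩ := hx
  have hinv : HasFDerivAt Ring.inverse
      (-ContinuousLinearMap.mulLeftRight 𝕜 R (Ring.inverse (f x)) (Ring.inverse (f x))) (f x) := by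
    simpa [← hu] using hasFDerivAt_ringInverse (𝕜 := 𝕜) u
  simpa [Function.comp_def] using hinv.comp_hasDerivAt x hf

section MatrixDeriv

variable {𝕜 α : Type*} [NontriviallyNormedField 𝕜] {l m n : Type*} [Fintype l] [Fintype m]
  [Fintype n]

theorem Matrix.norm_entry_le_linfty_opNorm [NormedAddCommGroup α] (M : Matrix m n α) (i : m)
    (j : n) : ‖M i j‖ ≤ ‖M‖ := by
  rw [← coe_nnnorm, ← coe_nnnorm, NNReal.coe_le_coe, linfty_opNNNorm_def]
  exact (Finset.single_le_sum (fun _ _ => zero_le) (Finset.mem_univ j)).trans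
    (Finset.le_sup (f := fun i => ∑ j, ‖M i j‖₊) (Finset.mem_univ i))

theorem HasDerivAt.matrix_apply [NormedAddCommGroup α] [NormedSpace 𝕜 α]
    {f : 𝕜 → Matrix m n α} {f' : Matrix m n α} {x : 𝕜} (hf : HasDerivAt f f' x) (i : m) (j : n) :
    HasDerivAt (fun y => f y i j) (f' i j) x :=
  ((entryLinearMap 𝕜 α i j).mkContinuous 1 fun M => by
    simpa using M.norm_entry_le_linfty_opNorm i j).hasFDerivAt.comp_hasDerivAt x hf

theorem HasDerivAt.matrix_const_mul [NormedRing α] [NormedAlgebra 𝕜 α] {f : 𝕜 → Matrix m n α}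
    {f' : Matrix m n α} {x : 𝕜} (hf : HasDerivAt f f' x) (X : Matrix l m α) :
    HasDerivAt (fun y => X * f y) (X * f') x :=
  ((mulLeftLinearMap n 𝕜 X).mkContinuous ‖X‖ (linfty_opNorm_mul X)).hasFDerivAt.comp_hasDerivAt
    x hf

theorem HasDerivAt.matrix_mul_const [NormedRing α] [NormedAlgebra 𝕜 α] {f : 𝕜 → Matrix l m α}
    {f' : Matrix l m α} {x : 𝕜} (hf : HasDerivAt f f' x) (Y : Matrix m n α) :
    HasDerivAt (fun y => f y * Y) (f' * Y) x :=
  ((mulRightLinearMap l 𝕜 Y).mkContinuous ‖Y‖ fun X =>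
    (linfty_opNorm_mul X Y).trans_eq (mul_comm _ _)).hasFDerivAt.comp_hasDerivAt x hf

variable [NontriviallyNormedField α] [CompleteSpace α] [NormedAlgebra 𝕜 α] [DecidableEq n]

theorem HasDerivAt.matrix_inv {f : 𝕜 → Matrix n n α} {f' : Matrix n n α} {x : 𝕜}
    (hf : HasDerivAt f f' x) (hx : IsUnit (f x)) :
    HasDerivAt (fun y => (f y)⁻¹) (-((f x)⁻¹ * f' * (f x)⁻¹)) x := by
  have : HasSummableGeomSeries (Matrix n n α) :=
    @instHasSummableGeomSeriesOfCompleteSpace _ _ (FiniteDimensional.complete α _)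
  simp only [nonsing_inv_eq_ringInverse]
  exact hf.ringInverse hx

theorem HasDerivAt.inv_smul_sub {lam : 𝕜 → α} {lam' : α} {x : 𝕜} (A E : Matrix n n α)
    (hlam : HasDerivAt lam lam' x) (hx : IsUnit (lam x • E - A)) :
    HasDerivAt (fun y => (lam y • E - A)⁻¹)
      (-lam' • ((lam x • E - A)⁻¹ * E * (lam x • E - A)⁻¹)) x := by
  simpa [Matrix.mul_smul, Matrix.smul_mul] using ((hlam.smul_const E).sub_const A).matrix_inv hx

end MatrixDeriv

section TransferFunction

variable {n m p : ℕ} (A E : Matrix (Fin n) (Fin n) ℂ) (B : Matrix (Fin n) (Fin m) ℂ)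
  (C : Matrix (Fin p) (Fin n) ℂ) (D : Matrix (Fin p) (Fin m) ℂ) (lam lamd : ℝ → ℂ) {t : ℝ}

/-- The derivative of `t ↦ G(λ(t))`, where `lamd = λ'`. -/
noncomputable def transferFnDeriv (t : ℝ) : Matrix (Fin p) (Fin m) ℂ :=
  -lamd t • (C * (lam t • E - A)⁻¹ * E * (lam t • E - A)⁻¹ * B)

variable {lam lamd}

theorem hasDerivAt_transferFn_comp (hlam : HasDerivAt lam (lamd t) t)
    (ht : IsUnit (lam t • E - A)) :
    HasDerivAt (fun s => transferFn A B C D E (lam s)) (transferFnDeriv A E B C lam lamd t) t := by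
  have h := (((hlam.inv_smul_sub A E ht).matrix_const_mul C).matrix_mul_const B).add_const D
  refine h.congr_deriv ?_
  simp only [transferFnDeriv, Matrix.mul_neg, Matrix.neg_mul, Matrix.mul_smul, Matrix.smul_mul,
    neg_smul, Matrix.mul_assoc]

theorem hasDerivAt_transferFnDeriv {lam'' : ℂ} (hlam : HasDerivAt lam (lamd t) t)
    (hlamd : HasDerivAt lamd lam'' t) (ht : IsUnit (lam t • E - A)) :
    HasDerivAt (transferFnDeriv A E B C lam lamd)
      ((2 * lamd t ^ 2) •
          (C * (lam t • E - A)⁻¹ * E * (lam t • E - A)⁻¹ * E * (lam t • E - A)⁻¹ * B) -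
        lam'' • (C * (lam t • E - A)⁻¹ * E * (lam t • E - A)⁻¹ * B)) t := by
  set W := fun s => (lam s • E - A)⁻¹
  have hW : HasDerivAt W (-lamd t • (W t * E * W t)) t := hlam.inv_smul_sub A E ht
  have h := hlamd.neg.smul ((((hW.mul_const E).mul hW).matrix_const_mul C).matrix_mul_const B)
  refine (h.congr_deriv ?_).congr_of_eventuallyEq (.of_forall fun s => ?_)
  · simp only [Pi.neg_apply, Pi.mul_apply, W, Matrix.mul_smul, Matrix.smul_mul, Matrix.mul_add,
      Matrix.add_mul, Matrix.mul_assoc]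
    module
  · simp only [transferFnDeriv, Pi.smul_apply', Pi.neg_apply, Pi.mul_apply, W, Matrix.mul_assoc]

end TransferFunction

theorem transferFn_second_deriv {n m p : ℕ} (A E : Matrix (Fin n) (Fin n) ℂ)
    (B : Matrix (Fin n) (Fin m) ℂ) (C : Matrix (Fin p) (Fin n) ℂ)
    (D : Matrix (Fin p) (Fin m) ℂ) (lam : ℝ → ℂ) (lamd : ℝ → ℂ) (lam'' : ℂ)
    (hlam : ∀ t : ℝ, HasDerivAt lam (lamd t) t)
    (hlam'' : HasDerivAt lamd lam'' 0)
    (hZ : IsUnit ((lam 0) • E - A)) :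
    ∃ G1 : ℝ → Matrix (Fin p) (Fin m) ℂ,
      (∀ᶠ t : ℝ in nhds 0, ∀ i j,
        HasDerivAt (fun s : ℝ => (C * ((lam s) • E - A)⁻¹ * B + D) i j) (G1 t i j) t) ∧
      ∀ i j, HasDerivAt (fun t : ℝ => G1 t i j)
        ((((2 * (lamd 0) ^ 2) •
            (C * ((lam 0) • E - A)⁻¹ * E * ((lam 0) • E - A)⁻¹ * E * ((lam 0) • E - A)⁻¹ * B) -
          lam'' • (C * ((lam 0) • E - A)⁻¹ * E * ((lam 0) • E - A)⁻¹ * B) :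
            Matrix (Fin p) (Fin m) ℂ)) i j) 0 := by
  have hZ_near : ∀ᶠ t in nhds 0, IsUnit (lam t • E - A) :=
    (((hlam 0).smul_const E).sub_const A).continuousAt.eventually_mem (Units.isOpen.mem_nhds hZ)
  refine ⟨transferFnDeriv A E B C lam lamd, ?_, fun i j => ?_⟩
  · filter_upwards [hZ_near] with t ht i j
    exact (hasDerivAt_transferFn_comp A E B C D (hlam t) ht).matrix_apply i j
  · exact (hasDerivAt_transferFnDeriv A E B C (hlam 0) hlam'' hZ).matrix_apply i j
end

section
/- Let ε > 0 with ε‖D‖₂ < 1, E invertible, (A,E) regular. The ε-spectral value set σ_ε(A,B,C,D,E) = ⋃{ spec(M(Δ),E) : ‖Δ‖₂ ≤ ε } is a compact subset of ℂ. -/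
open Matrix Filter Set

section Aux

open scoped Matrix.Norms.L2Operator

lemma specNorm_eq {q r : ℕ} (A : Matrix (Fin q) (Fin r) ℂ) : specNorm A = ‖A‖ := rfl

lemma aux_isUnit_one_sub {k : ℕ} (N : Matrix (Fin k) (Fin k) ℂ) (h : ‖N‖ < 1) :
    IsUnit (1 - N) := (Units.oneSub N h).isUnit

lemma aux_det_ne_zero {k : ℕ} (N : Matrix (Fin k) (Fin k) ℂ) (z : ℂ) (h : ‖N‖ < ‖z‖) :
    (z • (1 : Matrix (Fin k) (Fin k) ℂ) - N).det ≠ 0 := by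
  have hz0 : (0:ℝ) < ‖z‖ := lt_of_le_of_lt (norm_nonneg N) h
  have hz : z ≠ 0 := by simpa using norm_pos_iff.mp hz0
  have h1 : ‖z⁻¹ • N‖ < 1 := by
    rw [norm_smul, norm_inv, inv_mul_lt_one₀ hz0]
    exact h
  have hu : IsUnit (1 - z⁻¹ • N) := aux_isUnit_one_sub _ h1
  have hd : (1 - z⁻¹ • N).det ≠ 0 :=
    IsUnit.ne_zero ((Matrix.isUnit_iff_isUnit_det _).mp hu)
  have key : z • (1 : Matrix (Fin k) (Fin k) ℂ) - N = z • (1 - z⁻¹ • N) := by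
    rw [smul_sub, smul_smul, mul_inv_cancel₀ hz, one_smul]
  rw [key, Matrix.det_smul]
  exact mul_ne_zero (pow_ne_zero _ hz) hd

end Aux

open scoped Matrix.Norms.L2Operator

set_option maxHeartbeats 1000000

theorem svSet_isCompact {n m p : ℕ} (A : Matrix (Fin n) (Fin n) ℂ)
    (B : Matrix (Fin n) (Fin m) ℂ) (C : Matrix (Fin p) (Fin n) ℂ)
    (D : Matrix (Fin p) (Fin m) ℂ) (E : Matrix (Fin n) (Fin n) ℂ)
    (hE : IsUnit E) (hreg : ∃ w : ℂ, (w • E - A).det ≠ 0)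
    (ε : ℝ) (hε : 0 < ε) (hεD : ε * specNorm D < 1) :
    IsCompact (svSet ε A B C D E) := by
  classical
  have hεD' : ε * ‖D‖ < 1 := by rwa [specNorm_eq] at hεD
  have hDn : (0:ℝ) ≤ ‖D‖ := norm_nonneg _
  have hcpos : (0:ℝ) < 1 - ε * ‖D‖ := by linarith
  set c : ℝ := (1 - ε * ‖D‖)⁻¹ with hc
  have hcinv : c * (1 - ε * ‖D‖) = 1 := inv_mul_cancel₀ hcpos.ne'
  have hone : ‖(1 : Matrix (Fin p) (Fin p) ℂ)‖ ≤ 1 := by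
    rw [Matrix.cstar_norm_def, _root_.map_one, ContinuousLinearMap.one_def]
    exact ContinuousLinearMap.norm_id_le
  -- invertibility of 1 - D Δ and bound for its inverse
  have key : ∀ Δ : Matrix (Fin m) (Fin p) ℂ, ‖Δ‖ ≤ ε →
      (1 - D * Δ).det ≠ 0 ∧ ‖(1 - D * Δ)⁻¹‖ ≤ c := by
    intro Δ hΔ
    have hDΔ : ‖D * Δ‖ ≤ ε * ‖D‖ := by
      have h1 := Matrix.l2_opNorm_mul D Δ
      nlinarith [norm_nonneg Δ, norm_nonneg (D * Δ)]
    have hlt : ‖D * Δ‖ < 1 := lt_of_le_of_lt hDΔ hεD'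
    have hu : IsUnit (1 - D * Δ) := aux_isUnit_one_sub _ hlt
    have hud : IsUnit (1 - D * Δ).det := (Matrix.isUnit_iff_isUnit_det _).mp hu
    refine ⟨hud.ne_zero, ?_⟩
    set u := (1 - D * Δ)⁻¹ with hu_def
    have h1 : (1 - D * Δ) * u = 1 := Matrix.mul_nonsing_inv _ hud
    have h1' : u - D * Δ * u = 1 := by rwa [sub_mul, one_mul] at h1
    have h2 : u = 1 + D * Δ * u := eq_add_of_sub_eq h1'
    have hnu : ‖u‖ ≤ 1 + ε * ‖D‖ * ‖u‖ := by
      calc ‖u‖ = ‖1 + D * Δ * u‖ := by rw [← h2]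
        _ ≤ ‖(1 : Matrix (Fin p) (Fin p) ℂ)‖ + ‖D * Δ * u‖ := norm_add_le _ _
        _ ≤ 1 + ε * ‖D‖ * ‖u‖ := by
            have h3 := Matrix.l2_opNorm_mul (D * Δ) u
            nlinarith [norm_nonneg u, norm_nonneg (D * Δ * u)]
    nlinarith [norm_nonneg u]
  -- bound on the spectral value set
  set R₀ : ℝ := ‖A‖ + ‖B‖ * (ε * (c * ‖C‖)) with hR₀
  set R : ℝ := ‖E⁻¹‖ * R₀ with hR
  have hzbound : ∀ z : ℂ, z ∈ svSet ε A B C D E → ‖z‖ ≤ R := by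
    intro z hz
    obtain ⟨Δ, hΔ, hdet⟩ := hz
    rw [specNorm_eq] at hΔ
    obtain ⟨hd, hub⟩ := key Δ hΔ
    set M := pertSys A B C D Δ with hM_def
    have hM : ‖M‖ ≤ R₀ := by
      have h2 := Matrix.l2_opNorm_mul (B * Δ) ((1 - D * Δ)⁻¹)
      have h3 := Matrix.l2_opNorm_mul (B * Δ * (1 - D * Δ)⁻¹) C
      have h4 := Matrix.l2_opNorm_mul B Δ
      have h5 : ‖M‖ ≤ ‖A‖ + ‖B * Δ * (1 - D * Δ)⁻¹ * C‖ := norm_add_le _ _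
      have hcnn : (0:ℝ) ≤ c := le_of_lt (inv_pos.mpr hcpos)
      have s1 : ‖B * Δ * (1 - D * Δ)⁻¹ * C‖ ≤ ‖B‖ * ε * c * ‖C‖ := by
        calc ‖B * Δ * (1 - D * Δ)⁻¹ * C‖ ≤ ‖B * Δ * (1 - D * Δ)⁻¹‖ * ‖C‖ := h3
          _ ≤ ‖B‖ * ε * c * ‖C‖ := by
              apply mul_le_mul_of_nonneg_right _ (norm_nonneg C)
              calc ‖B * Δ * (1 - D * Δ)⁻¹‖ ≤ ‖B * Δ‖ * ‖(1 - D * Δ)⁻¹‖ := h2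
                _ ≤ ‖B‖ * ε * c := by
                    apply mul_le_mul _ hub (norm_nonneg _) (by positivity)
                    calc ‖B * Δ‖ ≤ ‖B‖ * ‖Δ‖ := h4
                      _ ≤ ‖B‖ * ε := mul_le_mul_of_nonneg_left hΔ (norm_nonneg B)
      rw [hR₀]
      nlinarith [s1]
    have hEd : IsUnit E.det := (Matrix.isUnit_iff_isUnit_det E).mp hE
    have hEE : E * E⁻¹ = 1 := Matrix.mul_nonsing_inv E hEd
    have hfac : E * (z • (1 : Matrix (Fin n) (Fin n) ℂ) - E⁻¹ * M) = z • E - M := by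
      rw [Matrix.mul_sub, Matrix.mul_smul, Matrix.mul_one, ← Matrix.mul_assoc, hEE,
        Matrix.one_mul]
    have hdet2 : (z • (1 : Matrix (Fin n) (Fin n) ℂ) - E⁻¹ * M).det = 0 := by
      have h6 := congrArg Matrix.det hfac
      rw [Matrix.det_mul, hdet] at h6
      exact (mul_eq_zero.mp h6).resolve_left hEd.ne_zero
    by_contra hzR
    push_neg at hzR
    have hnorm : ‖E⁻¹ * M‖ ≤ R := by
      have h7 := Matrix.l2_opNorm_mul E⁻¹ M
      nlinarith [norm_nonneg (E⁻¹ : Matrix (Fin n) (Fin n) ℂ), norm_nonneg (E⁻¹ * M),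
        mul_le_mul_of_nonneg_left hM (norm_nonneg (E⁻¹ : Matrix (Fin n) (Fin n) ℂ))]
    exact aux_det_ne_zero _ z (lt_of_le_of_lt hnorm hzR) hdet2
  -- the continuous polynomial function G
  set G : Matrix (Fin m) (Fin p) ℂ × ℂ → ℂ := fun q =>
    ((1 - D * q.1).det • (q.2 • E - A) - B * q.1 * (1 - D * q.1).adjugate * C).det with hG_def
  have hG : Continuous G := by
    apply Continuous.matrix_det
    apply Continuous.sub
    · exact (Continuous.matrix_det
        (continuous_const.sub (continuous_const.matrix_mul continuous_fst))).smul
        ((continuous_snd.smul continuous_const).sub continuous_const)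
    · exact ((continuous_const.matrix_mul continuous_fst).matrix_mul
        (Continuous.matrix_adjugate
          (continuous_const.sub (continuous_const.matrix_mul continuous_fst)))).matrix_mul
        continuous_const
  -- the determinant identity
  have hiff : ∀ (Δ : Matrix (Fin m) (Fin p) ℂ) (z : ℂ), (1 - D * Δ).det ≠ 0 →
      ((z • E - pertSys A B C D Δ).det = 0 ↔ G (Δ, z) = 0) := by
    intro Δ z hd
    have hinv : (1 - D * Δ)⁻¹ = ((1 - D * Δ).det)⁻¹ • (1 - D * Δ).adjugate := by
      rw [Matrix.inv_def, Ring.inverse_eq_inv']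
    have hrw : z • E - pertSys A B C D Δ =
        ((1 - D * Δ).det)⁻¹ •
          ((1 - D * Δ).det • (z • E - A) - B * Δ * (1 - D * Δ).adjugate * C) := by
      have hX : B * Δ * (1 - D * Δ)⁻¹ * C =
          ((1 - D * Δ).det)⁻¹ • (B * Δ * (1 - D * Δ).adjugate * C) := by
        rw [hinv, Matrix.mul_smul, Matrix.smul_mul]
      rw [pertSys, hX, smul_sub, smul_smul, inv_mul_cancel₀ hd, one_smul]
      abel
    rw [hG_def]
    simp only []
    rw [hrw, Matrix.det_smul]
    constructor
    · intro h
      rcases mul_eq_zero.mp h with h' | h'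
      · exact absurd h' (pow_ne_zero _ (inv_ne_zero hd))
      · exact h'
    · intro h
      rw [h, mul_zero]
  -- identify svSet as a projection of a compact set
  have himg : svSet ε A B C D E =
      Prod.snd '' (((Metric.closedBall (0 : Matrix (Fin m) (Fin p) ℂ) ε) ×ˢ
        (Metric.closedBall (0 : ℂ) R)) ∩ G ⁻¹' {0}) := by
    ext z
    constructor
    · rintro ⟨Δ, hΔ, hdet⟩
      have hΔ' : ‖Δ‖ ≤ ε := by rwa [specNorm_eq] at hΔ
      have hz : ‖z‖ ≤ R := hzbound z ⟨Δ, hΔ, hdet⟩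
      refine ⟨(Δ, z), ⟨⟨?_, ?_⟩, ?_⟩, rfl⟩
      · simpa [mem_closedBall_zero_iff] using hΔ'
      · simpa [mem_closedBall_zero_iff] using hz
      · simpa using (hiff Δ z (key Δ hΔ').1).mp hdet
    · rintro ⟨⟨Δ, w⟩, ⟨⟨hΔ, -⟩, hg⟩, rfl⟩
      have hΔ' : ‖Δ‖ ≤ ε := by simpa [mem_closedBall_zero_iff] using hΔ
      exact ⟨Δ, by rwa [specNorm_eq], (hiff Δ w (key Δ hΔ').1).mpr (by simpa using hg)⟩
  rw [himg]
  haveI : ProperSpace (Matrix (Fin m) (Fin p) ℂ) := FiniteDimensional.proper ℂ _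
  exact (((isCompact_closedBall _ _).prod (isCompact_closedBall _ _)).inter_right
    (isClosed_singleton.preimage hG)).image continuous_snd
end

section
/- Let ε > 0 with ε‖D‖₂ < 1, E invertible, (A,E) regular. Suppose every eigenvalue of (A,E) has modulus strictly less than some η > 0 and the circle {z : |z| = η} is contained in the interior of σ_ε(A,B,C,D,E), and suppose there is r > η such that the circle {z : |z| = r} is contained in the boundary of σ_ε(A,B,C,D,E). Then ρ_ε(A,B,C,D,E) = r, i.e., r is the maximal modulus of points in σ_ε(A,B,C,D,E). -/
open Matrix Filter Set

/-!
For `‖z‖ > η` the pencil `z • E - A` is invertible, and the Weinstein–Aronszajn identity together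
with the small-gain bound and a rank-one perturbation shows that `z ∈ σ_ε` iff
`‖G z‖ ≥ ε⁻¹`, where `G` is the transfer function. By continuity of `G`, a boundary point of
`σ_ε` outside the disc of radius `η` has `‖G z‖ = ε⁻¹`; so `‖G‖ = ε⁻¹` on the whole circle of
radius `r`, and every point of that circle lies in `σ_ε`. In the coordinate `ζ = z⁻¹` the transfer
function is holomorphic on `‖ζ‖ < η⁻¹` with value `D` at `ζ = 0`, and `‖D‖ < ε⁻¹`; the maximum
modulus principle on the disc `‖ζ‖ ≤ r⁻¹` then gives `‖G z‖ < ε⁻¹`, i.e. `z ∉ σ_ε`, for `‖z‖ > r`.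
-/

-- For this norm, `specNorm M` is definitionally `‖M‖`.
open scoped Matrix.Norms.L2Operator Topology

namespace ContinuousLinearMap

variable {𝕜 E F : Type*} [RCLike 𝕜]

lemma exists_norm_eq_one_norm_apply_eq_opNorm [NormedAddCommGroup E] [NormedSpace 𝕜 E]
    [FiniteDimensional 𝕜 E] [Nontrivial E] [SeminormedAddCommGroup F] [NormedSpace 𝕜 F]
    (T : E →L[𝕜] F) : ∃ x, ‖x‖ = 1 ∧ ‖T x‖ = ‖T‖ := by
  have : NormedSpace ℝ E := NormedSpace.restrictScalars ℝ 𝕜 E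
  have : ProperSpace E := FiniteDimensional.proper 𝕜 E
  have hK : IsCompact ((fun x => ‖T x‖) '' Metric.sphere 0 1) :=
    (isCompact_sphere 0 1).image (by fun_prop)
  obtain ⟨x, hx, hTx⟩ := T.sSup_sphere_eq_norm ▸
    hK.sSup_mem ((NormedSpace.sphere_nonempty.2 zero_le_one).image _)
  exact ⟨x, mem_sphere_zero_iff_norm.1 hx, hTx⟩

open InnerProductSpace in
/-- `S` is the rank-one operator `w ↦ ⟪T u, w⟫ u / ‖T u‖²`, for a unit vector `u` at which `T`
attains its norm. -/
lemma exists_norm_eq_inv_opNorm_apply_comp_eq [NormedAddCommGroup E] [InnerProductSpace 𝕜 E]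
    [FiniteDimensional 𝕜 E] [NormedAddCommGroup F] [InnerProductSpace 𝕜 F]
    (T : E →L[𝕜] F) (hT : T ≠ 0) :
    ∃ S : F →L[𝕜] E, ‖S‖ = ‖T‖⁻¹ ∧ ∃ w ≠ 0, T (S w) = w := by
  obtain ⟨x, hx⟩ := DFunLike.ne_iff.1 hT
  have : Nontrivial E := nontrivial_of_ne x 0 fun h => hx (by simp [h])
  obtain ⟨u, hu, hTu⟩ := T.exists_norm_eq_one_norm_apply_eq_opNorm
  have hTu0 : T u ≠ 0 := by rw [← norm_ne_zero_iff, hTu]; exact norm_ne_zero_iff.2 hT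
  refine ⟨((‖T u‖ : 𝕜) ^ 2)⁻¹ • rankOne 𝕜 u (T u), ?_, T u, hTu0, ?_⟩
  · have : ‖T‖ ≠ 0 := norm_ne_zero_iff.2 hT
    simp only [norm_smul, norm_inv, norm_pow, RCLike.norm_ofReal, abs_norm, norm_rankOne, hu, hTu]
    field_simp
  · simp [inner_self_eq_norm_sq_to_K, hTu0]

end ContinuousLinearMap

namespace Matrix

variable {𝕜 ι κ : Type*} [RCLike 𝕜] [Fintype ι] [DecidableEq ι] [Fintype κ] [DecidableEq κ]

lemma one_le_norm_mul_norm_of_det_one_sub_mul_eq_zero (G : Matrix ι κ 𝕜) (Δ : Matrix κ ι 𝕜)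
    (h : (1 - G * Δ).det = 0) : 1 ≤ ‖G‖ * ‖Δ‖ := by
  by_contra! hlt
  have hunit := isUnit_one_sub_of_norm_lt_one ((l2_opNorm_mul G Δ).trans_lt hlt)
  simp [isUnit_iff_isUnit_det, h] at hunit

lemma exists_norm_le_det_one_sub_mul_eq_zero {ε : ℝ} (G : Matrix ι κ 𝕜) (hG : 1 ≤ ε * ‖G‖) :
    ∃ Δ : Matrix κ ι 𝕜, ‖Δ‖ ≤ ε ∧ (1 - G * Δ).det = 0 := by
  have hG0 : G ≠ 0 := by rintro rfl; simp at hG; linarith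
  let L₁ := (toEuclideanLin (𝕜 := 𝕜) (m := ι) (n := κ)).trans LinearMap.toContinuousLinearMap
  let L₂ := (toEuclideanLin (𝕜 := 𝕜) (m := κ) (n := ι)).trans LinearMap.toContinuousLinearMap
  obtain ⟨S, hS, w, hw, hGSw⟩ := (L₁ G).exists_norm_eq_inv_opNorm_apply_comp_eq
    (L₁.map_ne_zero_iff.2 hG0)
  refine ⟨L₂.symm S, ?_, ?_⟩
  · rw [l2_opNorm_def, LinearEquiv.apply_symm_apply, hS]
    exact (inv_le_iff_one_le_mul₀ (norm_pos_iff.2 hG0)).2 hG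
  · rw [← exists_mulVec_eq_zero_iff]
    refine ⟨WithLp.ofLp w, by simpa using hw, ?_⟩
    have hΔ : L₂.symm S *ᵥ w.ofLp = (S w).ofLp := by
      conv_rhs => rw [← L₂.apply_symm_apply S]
      rfl
    have hG : G *ᵥ (S w).ofLp = w.ofLp := congrArg WithLp.ofLp hGSw
    rw [sub_mulVec, one_mulVec, ← mulVec_mulVec, hΔ, hG, sub_self]

end Matrix

/-- The transfer function in the coordinate `ζ = z⁻¹`, which stays holomorphic at `ζ = 0`
(`z = ∞`) when `E` is invertible. -/
noncomputable def transferFnRecip {n m p : ℕ} (A : Matrix (Fin n) (Fin n) ℂ)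
    (B : Matrix (Fin n) (Fin m) ℂ) (C : Matrix (Fin p) (Fin n) ℂ)
    (D : Matrix (Fin p) (Fin m) ℂ) (E : Matrix (Fin n) (Fin n) ℂ) (ζ : ℂ) :
    Matrix (Fin p) (Fin m) ℂ :=
  ζ • (C * (E - ζ • A)⁻¹ * B) + D

section SpectralValueSet

variable {n m p : ℕ} (A : Matrix (Fin n) (Fin n) ℂ) (B : Matrix (Fin n) (Fin m) ℂ)
  (C : Matrix (Fin p) (Fin n) ℂ) (D : Matrix (Fin p) (Fin m) ℂ) (E : Matrix (Fin n) (Fin n) ℂ)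

lemma det_sub_pertSys_mul_det_one_sub {z : ℂ} {Δ : Matrix (Fin m) (Fin p) ℂ}
    (hP : IsUnit (z • E - A).det) (hN : IsUnit (1 - D * Δ).det) :
    (z • E - pertSys A B C D Δ).det * (1 - D * Δ).det =
      (z • E - A).det * (1 - transferFn A B C D E z * Δ).det := by
  have hsplit : z • E - pertSys A B C D Δ = (z • E - A) + (-(B * Δ * (1 - D * Δ)⁻¹)) * C := by
    rw [pertSys, Matrix.neg_mul]; abel
  have hfactor : (1 + C * (z • E - A)⁻¹ * -(B * Δ * (1 - D * Δ)⁻¹)) * (1 - D * Δ) =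
      1 - transferFn A B C D E z * Δ := by
    simp only [Matrix.add_mul, Matrix.mul_neg, Matrix.neg_mul, Matrix.one_mul, transferFn,
      Matrix.mul_assoc, Matrix.nonsing_inv_mul _ hN, Matrix.mul_one]
    abel
  rw [hsplit, det_add_mul _ _ hP, mul_assoc, ← det_mul, hfactor]

lemma mem_svSet_iff {ε : ℝ} (hε : 0 < ε) (hεD : ε * specNorm D < 1) {z : ℂ}
    (hP : IsUnit (z • E - A).det) :
    z ∈ svSet ε A B C D E ↔ ε⁻¹ ≤ ‖transferFn A B C D E z‖ := by
  have hN : ∀ Δ : Matrix (Fin m) (Fin p) ℂ, ‖Δ‖ ≤ ε → IsUnit (1 - D * Δ).det := fun Δ hΔ =>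
    (isUnit_iff_isUnit_det _).1 <| isUnit_one_sub_of_norm_lt_one <|
      calc ‖D * Δ‖ ≤ ‖D‖ * ‖Δ‖ := l2_opNorm_mul D Δ
        _ ≤ ε * ‖D‖ := by rw [mul_comm ε]; gcongr
        _ < 1 := hεD
  have hdet : ∀ Δ : Matrix (Fin m) (Fin p) ℂ, ‖Δ‖ ≤ ε →
      ((z • E - pertSys A B C D Δ).det = 0 ↔ (1 - transferFn A B C D E z * Δ).det = 0) :=
    fun Δ hΔ => by
      rw [← mul_eq_zero_iff_right (hN Δ hΔ).ne_zero,
        det_sub_pertSys_mul_det_one_sub A B C D E hP (hN Δ hΔ), mul_eq_zero_iff_left hP.ne_zero]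
  rw [inv_le_iff_one_le_mul₀' hε]
  constructor
  · rintro ⟨Δ, hΔ, hzΔ⟩
    calc 1 ≤ ‖transferFn A B C D E z‖ * ‖Δ‖ :=
          one_le_norm_mul_norm_of_det_one_sub_mul_eq_zero _ _ ((hdet Δ hΔ).1 hzΔ)
      _ ≤ ε * ‖transferFn A B C D E z‖ := by rw [mul_comm ε]; gcongr; exact hΔ
  · intro h
    obtain ⟨Δ, hΔ, hGΔ⟩ := exists_norm_le_det_one_sub_mul_eq_zero _ h
    exact ⟨Δ, hΔ, (hdet Δ hΔ).2 hGΔ⟩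

lemma isUnit_sub_smul_of_norm_lt {η : ℝ} (hE : IsUnit E)
    (heig : ∀ z : ℂ, (z • E - A).det = 0 → ‖z‖ < η) {ζ : ℂ} (hζ : ‖ζ‖ < η⁻¹) :
    IsUnit (E - ζ • A) := by
  rcases eq_or_ne ζ 0 with rfl | hζ0
  · simpa using hE
  have hη : η < ‖ζ⁻¹‖ := by
    rw [norm_inv]
    exact lt_inv_of_lt_inv₀ (norm_pos_iff.2 hζ0) hζ
  have hfactor : E - ζ • A = ζ • (ζ⁻¹ • E - A) := by rw [smul_sub, smul_inv_smul₀ hζ0]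
  rw [hfactor, isUnit_iff_isUnit_det, det_smul, isUnit_iff_ne_zero]
  exact mul_ne_zero (pow_ne_zero _ hζ0) fun h => (heig _ h).not_gt hη

lemma differentiableOn_transferFnRecip :
    DifferentiableOn ℂ (transferFnRecip A B C D E) {ζ | IsUnit (E - ζ • A)} := by
  have hCB : Differentiable ℂ fun X : Matrix (Fin n) (Fin n) ℂ => C * X * B :=
    (mulRightLinearMap (Fin p) ℂ B ∘ₗ
      mulLeftLinearMap (Fin n) ℂ C).toContinuousLinearMap.differentiable
  have hinv : DifferentiableOn ℂ (fun ζ : ℂ => Ring.inverse (E - ζ • A))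
      {ζ | IsUnit (E - ζ • A)} :=
    (by fun_prop : Differentiable ℂ fun ζ : ℂ => E - ζ • A).differentiableOn.inverse fun _ h => h
  unfold transferFnRecip
  simp only [nonsing_inv_eq_ringInverse]
  exact (differentiableOn_id.smul (hCB.comp_differentiableOn hinv)).add_const D

@[simp] lemma transferFnRecip_zero : transferFnRecip A B C D E 0 = D := by
  simp [transferFnRecip]

lemma transferFn_eq_transferFnRecip_inv {z : ℂ} (hz : z ≠ 0) (hP : IsUnit (z • E - A).det) :
    transferFn A B C D E z = transferFnRecip A B C D E z⁻¹ := by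
  have hinv : (E - z⁻¹ • A)⁻¹ = z • (z • E - A)⁻¹ := by
    have hfactor : E - z⁻¹ • A = z⁻¹ • (z • E - A) := by rw [smul_sub, inv_smul_smul₀ hz]
    refine inv_eq_right_inv ?_
    rw [hfactor, smul_mul_smul_comm, inv_mul_cancel₀ hz, one_smul, mul_nonsing_inv _ hP]
  rw [transferFnRecip, hinv, transferFn, Matrix.mul_smul, Matrix.smul_mul, smul_smul,
    inv_mul_cancel₀ hz, one_smul]

lemma differentiableOn_ball_transferFnRecip {η : ℝ} (hE : IsUnit E)
    (heig : ∀ z : ℂ, (z • E - A).det = 0 → ‖z‖ < η) :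
    DifferentiableOn ℂ (transferFnRecip A B C D E) (Metric.ball 0 η⁻¹) :=
  (differentiableOn_transferFnRecip A B C D E).mono fun _ hζ =>
    isUnit_sub_smul_of_norm_lt A E hE heig (mem_ball_zero_iff.1 hζ)

lemma mem_svSet_iff_transferFnRecip {ε η : ℝ} (hε : 0 < ε) (hεD : ε * specNorm D < 1)
    (hη : 0 < η) (heig : ∀ z : ℂ, (z • E - A).det = 0 → ‖z‖ < η) {z : ℂ} (hz : η < ‖z‖) :
    z ∈ svSet ε A B C D E ↔ ε⁻¹ ≤ ‖transferFnRecip A B C D E z⁻¹‖ := by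
  have hP : IsUnit (z • E - A).det := isUnit_iff_ne_zero.2 fun hdet => (heig z hdet).not_gt hz
  rw [mem_svSet_iff A B C D E hε hεD hP,
    transferFn_eq_transferFnRecip_inv A B C D E (norm_pos_iff.1 (hη.trans hz)) hP]

end SpectralValueSet

lemma eq_of_mem_frontier_of_mem_iff_le {X : Type*} [TopologicalSpace X] {S O : Set X}
    {f : X → ℝ} {c : ℝ} (hO : IsOpen O) (hf : ContinuousOn f O) (hS : ∀ x ∈ O, x ∈ S ↔ c ≤ f x)
    {x : X} (hxO : x ∈ O) (hx : x ∈ frontier S) : f x = c := by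
  have hfx : ContinuousAt f x := hf.continuousAt (hO.mem_nhds hxO)
  refine le_antisymm (not_lt.1 fun hlt => hx.2 ?_) ?_
  · rw [mem_interior_iff_mem_nhds]
    filter_upwards [hO.mem_nhds hxO, hfx.eventually (lt_mem_nhds hlt)] with y hyO hy
    exact (hS y hyO).2 hy.le
  · have hSO : ∃ᶠ y in 𝓝 x, y ∈ S ∧ y ∈ O :=
      (mem_closure_iff_frequently.1 hx.1).and_eventually (hO.mem_nhds hxO)
    exact isClosed_Ici.mem_of_frequently_of_tendsto (hSO.mono fun y hy => (hS y hy.2).1 hy.1) hfx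

lemma Complex.norm_lt_of_forall_mem_sphere_norm_le {F : Type*} [NormedAddCommGroup F]
    [NormedSpace ℂ F] {f : ℂ → F} {c : ℂ} {R M : ℝ} (hf : DiffContOnCl ℂ f (Metric.ball c R))
    (hsphere : ∀ ζ ∈ Metric.sphere c R, ‖f ζ‖ ≤ M) (hc : ‖f c‖ < M) {ζ : ℂ}
    (hζ : ζ ∈ Metric.ball c R) : ‖f ζ‖ < M := by
  have hR : 0 < R := Metric.pos_of_mem_ball hζ
  have hle : ∀ x ∈ Metric.closedBall c R, ‖f x‖ ≤ M := by
    rw [← closure_ball c hR.ne']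
    exact fun x => Complex.norm_le_of_forall_mem_frontier_norm_le Metric.isBounded_ball hf
      (by rwa [frontier_ball c hR.ne'])
  by_contra! hMζ
  have hmax : IsMaxOn (norm ∘ f) (Metric.ball c R) ζ := fun x hx =>
    (hle x (Metric.ball_subset_closedBall hx)).trans hMζ
  have hcζ := Complex.norm_eqOn_closure_of_isPreconnected_of_isMaxOn
    (convex_ball c R).isPreconnected Metric.isOpen_ball hf hζ hmax
    (subset_closure (Metric.mem_ball_self hR))
  simp only [Function.comp_apply, Function.const_apply] at hcζ
  linarith

theorem boundary_circle_is_radius_general {n m p : ℕ} (A : Matrix (Fin n) (Fin n) ℂ)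
    (B : Matrix (Fin n) (Fin m) ℂ) (C : Matrix (Fin p) (Fin n) ℂ)
    (D : Matrix (Fin p) (Fin m) ℂ) (E : Matrix (Fin n) (Fin n) ℂ)
    (hE : IsUnit E)
    (ε : ℝ) (hε : 0 < ε) (hεD : ε * specNorm D < 1)
    (η : ℝ) (hη : 0 < η)
    (heig : ∀ z : ℂ, (z • E - A).det = 0 → ‖z‖ < η)
    (r : ℝ) (hr : η < r)
    (hbd : {z : ℂ | ‖z‖ = r} ⊆ frontier (svSet ε A B C D E)) :
    IsGreatest ((fun z : ℂ => ‖z‖) '' svSet ε A B C D E) r := by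
  set h := transferFnRecip A B C D E
  set O := {z : ℂ | η < ‖z‖}
  have hdiff : DifferentiableOn ℂ h (Metric.ball 0 η⁻¹) :=
    differentiableOn_ball_transferFnRecip A B C D E hE heig
  have hmem : ∀ z ∈ O, z ∈ svSet ε A B C D E ↔ ε⁻¹ ≤ ‖h z⁻¹‖ := fun _ hz =>
    mem_svSet_iff_transferFnRecip A B C D E hε hεD hη heig hz
  have hcont : ContinuousOn (fun z => ‖h z⁻¹‖) O := by
    refine (hdiff.continuousOn.comp (continuousOn_inv₀.mono fun z hz => ?_) fun z hz => ?_).norm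
    · exact norm_pos_iff.1 (hη.trans hz)
    · rw [mem_ball_zero_iff, norm_inv]
      exact inv_strictAnti₀ hη hz
  have hcircle : ∀ z : ℂ, ‖z‖ = r → ‖h z⁻¹‖ = ε⁻¹ := fun z hz =>
    eq_of_mem_frontier_of_mem_iff_le (isOpen_lt continuous_const continuous_norm) hcont hmem
      (show η < ‖z‖ from hz ▸ hr) (hbd hz)
  have hr0 : 0 < r := hη.trans hr
  have hrr : ‖(r : ℂ)‖ = r := by simp [hr0.le]
  refine ⟨⟨r, (hmem r (show η < ‖(r : ℂ)‖ by rwa [hrr])).2 (hcircle r hrr).ge, hrr⟩, ?_⟩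
  rintro _ ⟨z, hz, rfl⟩
  by_contra! hrz
  refine ((hmem z (hr.trans hrz)).1 hz).not_gt <|
    Complex.norm_lt_of_forall_mem_sphere_norm_le
      (hdiff.diffContOnCl_ball (Metric.closedBall_subset_ball (inv_strictAnti₀ hη hr)))
      (fun ζ hζ => ?_) ?_ ?_
  · simpa using (hcircle ζ⁻¹ (by rw [norm_inv, mem_sphere_zero_iff_norm.1 hζ, inv_inv])).le
  · rw [show h 0 = D from transferFnRecip_zero A B C D E, ← mul_one ε⁻¹, lt_inv_mul_iff₀ hε]
    exact hεD
  · simpa using inv_strictAnti₀ hr0 hrz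

theorem boundary_circle_is_radius {n m p : ℕ} (A : Matrix (Fin n) (Fin n) ℂ)
    (B : Matrix (Fin n) (Fin m) ℂ) (C : Matrix (Fin p) (Fin n) ℂ)
    (D : Matrix (Fin p) (Fin m) ℂ) (E : Matrix (Fin n) (Fin n) ℂ)
    (hE : IsUnit E) (hreg : ∃ w : ℂ, (w • E - A).det ≠ 0)
    (ε : ℝ) (hε : 0 < ε) (hεD : ε * specNorm D < 1)
    (η : ℝ) (hη : 0 < η)
    (heig : ∀ z : ℂ, (z • E - A).det = 0 → ‖z‖ < η)
    (hcirc : {z : ℂ | ‖z‖ = η} ⊆ interior (svSet ε A B C D E))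
    (r : ℝ) (hr : η < r)
    (hbd : {z : ℂ | ‖z‖ = r} ⊆ frontier (svSet ε A B C D E)) :
    IsGreatest ((fun z : ℂ => ‖z‖) '' svSet ε A B C D E) r :=
  boundary_circle_is_radius_general A B C D E hE ε hε hεD η hη heig r hr hbd
end

section
/- Let D ∈ ℂ^{p×m} and γ > 0 not a singular value of D. Then the 2×2-block matrix [[-D, γI_p],[γI_m, -D*]] (of size (p+m)×(p+m)) is invertible, with inverse [[-R⁻¹D*, -γR⁻¹],[-γS⁻¹, -DR⁻¹]], where R = D*D - γ²I_m and S = DD* - γ²I_p. -/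
open Matrix Filter Set

theorem block_matrix_inverse {p m : ℕ} (D : Matrix (Fin p) (Fin m) ℂ) (γ : ℝ) (hγ : 0 < γ)
    (hsv : ((γ ^ 2 : ℂ) • (1 : Matrix (Fin m) (Fin m) ℂ) - Dᴴ * D).det ≠ 0) :
    Matrix.fromBlocks (-D) ((γ : ℂ) • (1 : Matrix (Fin p) (Fin p) ℂ))
        ((γ : ℂ) • (1 : Matrix (Fin m) (Fin m) ℂ)) (-Dᴴ) *
      Matrix.fromBlocks (-((Dᴴ * D - (γ ^ 2 : ℂ) • 1)⁻¹ * Dᴴ))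
        (-((γ : ℂ) • (Dᴴ * D - (γ ^ 2 : ℂ) • 1)⁻¹))
        (-((γ : ℂ) • (D * Dᴴ - (γ ^ 2 : ℂ) • 1)⁻¹))
        (-(D * (Dᴴ * D - (γ ^ 2 : ℂ) • 1)⁻¹)) = 1 ∧
    Matrix.fromBlocks (-((Dᴴ * D - (γ ^ 2 : ℂ) • 1)⁻¹ * Dᴴ))
        (-((γ : ℂ) • (Dᴴ * D - (γ ^ 2 : ℂ) • 1)⁻¹))
        (-((γ : ℂ) • (D * Dᴴ - (γ ^ 2 : ℂ) • 1)⁻¹))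
        (-(D * (Dᴴ * D - (γ ^ 2 : ℂ) • 1)⁻¹)) *
      Matrix.fromBlocks (-D) ((γ : ℂ) • (1 : Matrix (Fin p) (Fin p) ℂ))
        ((γ : ℂ) • (1 : Matrix (Fin m) (Fin m) ℂ)) (-Dᴴ) = 1 := by
  set c : ℂ := (γ : ℂ) ^ 2 with hc_def
  have hc : c ≠ 0 := by
    simp [hc_def, pow_eq_zero_iff]
    exact_mod_cast hγ.ne'
  have hγγ : (γ : ℂ) * (γ : ℂ) = c := by rw [hc_def]; ring
  set R : Matrix (Fin m) (Fin m) ℂ := Dᴴ * D - c • 1 with hR_def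
  set S : Matrix (Fin p) (Fin p) ℂ := D * Dᴴ - c • 1 with hS_def
  clear_value c R S
  have hRdet : R.det ≠ 0 := by
    have : R = -(c • 1 - Dᴴ * D) := by rw [hR_def]; abel
    rw [this, Matrix.det_neg]
    simpa using hsv
  have hSdet : S.det ≠ 0 := by
    have hcc : (-c) * (-c⁻¹) = 1 := by field_simp
    have h1 : S = (-c) • (1 + ((-c⁻¹) • D) * Dᴴ) := by
      rw [hS_def, smul_add, Matrix.smul_mul, smul_smul, hcc, one_smul, sub_eq_add_neg,
        ← neg_smul, add_comm]
    have hcc' : c⁻¹ * c = 1 := inv_mul_cancel₀ hc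
    have h3 : (1 + Dᴴ * ((-c⁻¹) • D)) = c⁻¹ • (c • (1 : Matrix (Fin m) (Fin m) ℂ) - Dᴴ * D) := by
      rw [Matrix.mul_smul, smul_sub, smul_smul, hcc', one_smul, neg_smul, sub_eq_add_neg]
    rw [h1, Matrix.det_smul, Matrix.det_one_add_mul_comm, h3, Matrix.det_smul]
    exact mul_ne_zero (pow_ne_zero _ (neg_ne_zero.2 hc))
      (mul_ne_zero (pow_ne_zero _ (inv_ne_zero hc)) hsv)
  have hRR : R * R⁻¹ = 1 := Matrix.mul_nonsing_inv _ (isUnit_iff_ne_zero.2 hRdet)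
  have hRR' : R⁻¹ * R = 1 := Matrix.nonsing_inv_mul _ (isUnit_iff_ne_zero.2 hRdet)
  have hSS : S * S⁻¹ = 1 := Matrix.mul_nonsing_inv _ (isUnit_iff_ne_zero.2 hSdet)
  have hSS' : S⁻¹ * S = 1 := Matrix.nonsing_inv_mul _ (isUnit_iff_ne_zero.2 hSdet)
  have hDR : D * R = S * D := by
    rw [hR_def, hS_def]
    simp only [Matrix.mul_sub, Matrix.sub_mul, Matrix.mul_smul, Matrix.smul_mul,
      Matrix.mul_one, Matrix.one_mul, Matrix.mul_assoc]
  have hDS : Dᴴ * S = R * Dᴴ := by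
    rw [hR_def, hS_def]
    simp only [Matrix.mul_sub, Matrix.sub_mul, Matrix.mul_smul, Matrix.smul_mul,
      Matrix.mul_one, Matrix.one_mul, Matrix.mul_assoc]
  have hDRinv : D * R⁻¹ = S⁻¹ * D := by
    calc D * R⁻¹ = (S⁻¹ * S) * (D * R⁻¹) := by rw [hSS', Matrix.one_mul]
      _ = S⁻¹ * (S * D) * R⁻¹ := by simp only [Matrix.mul_assoc]
      _ = S⁻¹ * (D * R) * R⁻¹ := by rw [hDR]
      _ = S⁻¹ * D * (R * R⁻¹) := by simp only [Matrix.mul_assoc]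
      _ = S⁻¹ * D := by rw [hRR, Matrix.mul_one]
  have hDSinv : Dᴴ * S⁻¹ = R⁻¹ * Dᴴ := by
    calc Dᴴ * S⁻¹ = (R⁻¹ * R) * (Dᴴ * S⁻¹) := by rw [hRR', Matrix.one_mul]
      _ = R⁻¹ * (R * Dᴴ) * S⁻¹ := by simp only [Matrix.mul_assoc]
      _ = R⁻¹ * (Dᴴ * S) * S⁻¹ := by rw [hDS]
      _ = R⁻¹ * Dᴴ * (S * S⁻¹) := by simp only [Matrix.mul_assoc]
      _ = R⁻¹ * Dᴴ := by rw [hSS, Matrix.mul_one]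
  have tl : (-D) * (-(R⁻¹ * Dᴴ)) + ((γ : ℂ) • (1 : Matrix (Fin p) (Fin p) ℂ)) *
      (-((γ : ℂ) • S⁻¹)) = 1 := by
    simp only [Matrix.neg_mul, Matrix.mul_neg, neg_neg, Matrix.smul_mul, Matrix.mul_smul,
      Matrix.one_mul, smul_smul, smul_neg, hγγ]
    calc D * (R⁻¹ * Dᴴ) + -(c • S⁻¹) = S⁻¹ * (D * Dᴴ) - c • S⁻¹ := by
          rw [← Matrix.mul_assoc, hDRinv, Matrix.mul_assoc]; abel
      _ = S⁻¹ * (D * Dᴴ - c • 1) := by rw [Matrix.mul_sub, Matrix.mul_smul, Matrix.mul_one]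
      _ = 1 := by rw [← hS_def, hSS']
  have tr : (-D) * (-((γ : ℂ) • R⁻¹)) + ((γ : ℂ) • (1 : Matrix (Fin p) (Fin p) ℂ)) *
      (-(D * R⁻¹)) = 0 := by
    simp only [Matrix.neg_mul, Matrix.mul_neg, neg_neg, Matrix.mul_smul, Matrix.smul_mul,
      Matrix.one_mul, smul_neg]
    abel
  have bl : ((γ : ℂ) • (1 : Matrix (Fin m) (Fin m) ℂ)) * (-(R⁻¹ * Dᴴ)) + (-Dᴴ) *
      (-((γ : ℂ) • S⁻¹)) = 0 := by
    simp only [Matrix.neg_mul, Matrix.mul_neg, neg_neg, Matrix.mul_smul, Matrix.smul_mul,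
      Matrix.one_mul, smul_neg, hDSinv]
    abel
  have br : ((γ : ℂ) • (1 : Matrix (Fin m) (Fin m) ℂ)) * (-((γ : ℂ) • R⁻¹)) + (-Dᴴ) *
      (-(D * R⁻¹)) = 1 := by
    simp only [Matrix.neg_mul, Matrix.mul_neg, neg_neg, Matrix.mul_smul, Matrix.smul_mul,
      Matrix.one_mul, smul_smul, smul_neg, hγγ]
    calc -(c • R⁻¹) + Dᴴ * (D * R⁻¹) = (Dᴴ * D) * R⁻¹ - c • R⁻¹ := by
          rw [Matrix.mul_assoc]; abel
      _ = (Dᴴ * D - c • 1) * R⁻¹ := by rw [Matrix.sub_mul, Matrix.smul_mul, Matrix.one_mul]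
      _ = 1 := by rw [← hR_def, hRR]
  have key : Matrix.fromBlocks (-D) ((γ : ℂ) • (1 : Matrix (Fin p) (Fin p) ℂ))
        ((γ : ℂ) • (1 : Matrix (Fin m) (Fin m) ℂ)) (-Dᴴ) *
      Matrix.fromBlocks (-(R⁻¹ * Dᴴ)) (-((γ : ℂ) • R⁻¹)) (-((γ : ℂ) • S⁻¹)) (-(D * R⁻¹)) = 1 := by
    rw [Matrix.fromBlocks_multiply, tl, tr, bl, br, Matrix.fromBlocks_one]
  exact ⟨key, (Matrix.mul_eq_one_comm_of_equiv (Equiv.sumComm (Fin p) (Fin m))).mp key⟩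
end
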